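/- For every n ≥ 2 and every edge e of the complete graph K_n, the graph K_n \ e obtained by deleting the edge e satisfies gd(K_n \ e) = n − 1. -/

import Mathlib

/-!
Lower bound: apply a rank bound `k` for `G` to the identity matrix; on a clique `S` of `G` the
completion agrees with the identity, so its principal submatrix on `S` has rank `|S| ≤ k`. The
graph `K_n \ ij` has the clique `[n] \ {j}` of size `n - 1`.

Upper bound: write `X` as the Gram matrix of vectors `u_k` and let `W` be the span of the `u_k`
with `k ≠ i, j`, of dimension at most `n - 2`. Replace `u_j` by its projection onto `W` plus a
vector of the same length as its component orthogonal to `W`, chosen on the line `ℝ z` through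
the orthogonal component of `u_i` (or of `u_j`, if that of `u_i` vanishes). Only `⟪u_i, u_j⟫`
changes, and all the new vectors lie in `W ⊔ ℝ z`, of dimension at most `n - 1`.
-/

open Matrix Finset

/-- The Gram dimension of a graph `G`: the smallest integer `k ≥ 1` such that every
positive semidefinite matrix indexed by the vertices admits a positive semidefinite
matrix of rank at most `k` agreeing with it on the diagonal and on the edges of `G`. -/
noncomputable def gd {V : Type} [Fintype V] (G : SimpleGraph V) : ℕ :=
  sInf {k : ℕ | 1 ≤ k ∧ ∀ X : Matrix V V ℝ, X.PosSemidef →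
    ∃ Y : Matrix V V ℝ, Y.PosSemidef ∧ Y.rank ≤ k ∧
      (∀ i, Y i i = X i i) ∧ (∀ i j, G.Adj i j → Y i j = X i j)}

open scoped InnerProductSpace

namespace Matrix

variable {𝕜 E ι : Type*} [RCLike 𝕜] [NormedAddCommGroup E] [InnerProductSpace 𝕜 E] [Fintype ι]

theorem rank_gram_le (v : ι → E) :
    (gram 𝕜 v).rank ≤ Module.finrank 𝕜 (Submodule.span 𝕜 (Set.range v)) := by
  let L : E →ₗ[𝕜] ι → 𝕜 := LinearMap.pi fun k ↦ innerₛₗ 𝕜 (v k)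
  have hfactor : (gram 𝕜 v).mulVecLin = L ∘ₗ Fintype.linearCombination 𝕜 v := by
    ext x k
    simp [L, mulVec, dotProduct, Fintype.linearCombination_apply, mul_comm]
  have := FiniteDimensional.span_of_finite 𝕜 (Set.finite_range v)
  rw [rank, hfactor, LinearMap.range_comp, Fintype.range_linearCombination]
  exact Submodule.finrank_map_le L _

open scoped ComplexOrder in
theorem PosSemidef.exists_gram_eq {A : Matrix ι ι 𝕜} (hA : A.PosSemidef) :
    ∃ v : ι → EuclideanSpace 𝕜 ι, gram 𝕜 v = A := by
  classical
  obtain ⟨B, rfl⟩ : ∃ B : Matrix ι ι 𝕜, A = star B * B := by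
    open scoped MatrixOrder in exact CStarAlgebra.nonneg_iff_eq_star_mul_self.mp hA.nonneg
  refine ⟨fun k ↦ WithLp.toLp 2 (B.col k), ?_⟩
  ext k l
  simp [mul_apply, PiLp.inner_apply, mul_comm]

end Matrix

section GramVectors

variable {E ι : Type*} [NormedAddCommGroup E] [InnerProductSpace ℝ E]

namespace Submodule

theorem exists_mem_span_singleton_norm_eq (K : Submodule ℝ E) {x y : E} (hx : x ∈ K)
    (hy : y ∈ K) : ∃ z ∈ K, x ∈ ℝ ∙ z ∧ ∃ a ∈ ℝ ∙ z, ‖a‖ = ‖y‖ := by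
  rcases eq_or_ne x 0 with rfl | hx0
  · exact ⟨y, hy, zero_mem _, y, mem_span_singleton_self y, rfl⟩
  refine ⟨x, hx, mem_span_singleton_self x, (‖y‖ / ‖x‖) • x,
    smul_mem _ _ (mem_span_singleton_self x), ?_⟩
  rw [norm_smul, norm_div, norm_norm, norm_norm, div_mul_cancel₀ _ (norm_ne_zero_iff.mpr hx0)]

variable (K : Submodule ℝ E) [K.HasOrthogonalProjection]

theorem inner_starProjection_add_of_mem (u : E) {a v : E} (ha : a ∈ Kᗮ) (hv : v ∈ K) :
    ⟪K.starProjection u + a, v⟫_ℝ = ⟪u, v⟫_ℝ := by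
  rw [inner_add_left, K.inner_left_of_mem_orthogonal hv ha, add_zero,
    K.inner_starProjection_left_eq_right, K.starProjection_eq_self_iff.mpr hv]

theorem norm_starProjection_add_eq (u : E) {a : E} (ha : a ∈ Kᗮ)
    (h : ‖a‖ = ‖u - K.starProjection u‖) : ‖K.starProjection u + a‖ = ‖u‖ := by
  have pythagoras : ∀ b ∈ Kᗮ, ‖K.starProjection u + b‖ * ‖K.starProjection u + b‖ =
      ‖K.starProjection u‖ * ‖K.starProjection u‖ + ‖b‖ * ‖b‖ :=
    fun b hb ↦ norm_add_sq_eq_norm_sq_add_norm_sq_real <|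
      K.inner_right_of_mem_orthogonal (K.starProjection_apply_mem u) hb
  rw [← mul_self_inj (norm_nonneg _) (norm_nonneg _), pythagoras a ha, h,
    ← pythagoras _ (K.sub_starProjection_mem_orthogonal u), add_sub_cancel]

end Submodule

theorem inner_update_eq_off_pair [DecidableEq ι] {u : ι → E} {i j : ι} {v : E}
    (hnorm : ‖v‖ = ‖u j‖) (hinner : ∀ l, l ≠ i → l ≠ j → ⟪v, u l⟫_ℝ = ⟪u j, u l⟫_ℝ) {k l : ι}
    (hkl : s(k, l) ≠ s(i, j)) :
    ⟪Function.update u j v k, Function.update u j v l⟫_ℝ = ⟪u k, u l⟫_ℝ := by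
  simp only [Function.update_apply]
  split_ifs with hk hl hl
  · subst hk hl
    rw [real_inner_self_eq_norm_sq, real_inner_self_eq_norm_sq, hnorm]
  · subst hk
    exact hinner l (by rintro rfl; exact hkl Sym2.eq_swap) hl
  · subst hl
    rw [real_inner_comm, hinner k (by rintro rfl; exact hkl rfl) hk, real_inner_comm]
  · rfl

theorem exists_inner_eq_off_pair_finrank_span_le [Fintype ι] (u : ι → E) {i j : ι} (hij : i ≠ j) :
    ∃ w : ι → E, (∀ k l, s(k, l) ≠ s(i, j) → ⟪w k, w l⟫_ℝ = ⟪u k, u l⟫_ℝ) ∧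
      Module.finrank ℝ (Submodule.span ℝ (Set.range w)) ≤ Fintype.card ι - 1 := by
  classical
  set W := Submodule.span ℝ ((({i, j}ᶜ : Finset ι).image u : Finset E) : Set E)
  have hmemW : ∀ k, k ≠ i → k ≠ j → u k ∈ W := fun k hki hkj ↦
    Submodule.subset_span (mem_image_of_mem u (by simp [hki, hkj]))
  have hW : Module.finrank ℝ W ≤ Fintype.card ι - 2 := by
    refine (finrank_span_finset_le_card _).trans (card_image_le.trans ?_)
    rw [card_compl, card_pair hij]
  set P := W.starProjection
  obtain ⟨z, hzW, hxz, a, haz, ha⟩ := Wᗮ.exists_mem_span_singleton_norm_eq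
    (W.sub_starProjection_mem_orthogonal (u i)) (W.sub_starProjection_mem_orthogonal (u j))
  have haW : a ∈ Wᗮ := (Submodule.span_singleton_le_iff_mem z _).mpr hzW haz
  set v := P (u j) + a
  refine ⟨Function.update u j v, fun k l ↦ inner_update_eq_off_pair
    (W.norm_starProjection_add_eq _ haW ha)
    (fun l hli hlj ↦ W.inner_starProjection_add_of_mem _ haW (hmemW l hli hlj)), ?_⟩
  have hspan : Submodule.span ℝ (Set.range (Function.update u j v)) ≤ W ⊔ ℝ ∙ z := by
    rw [Submodule.span_le]
    rintro _ ⟨k, rfl⟩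
    rcases eq_or_ne k j with rfl | hkj
    · simpa using Submodule.add_mem_sup (W.starProjection_apply_mem _) haz
    rw [Function.update_of_ne hkj]
    rcases eq_or_ne k i with rfl | hki
    · rw [← add_sub_cancel (P (u k)) (u k)]
      exact Submodule.add_mem_sup (W.starProjection_apply_mem _) hxz
    · exact Submodule.mem_sup_left (hmemW k hki hkj)
  have hz : Module.finrank ℝ (ℝ ∙ z) ≤ 1 := (finrank_span_le_card {z}).trans (by simp)
  have hcard : 1 < Fintype.card ι := Fintype.one_lt_card_iff.mpr ⟨i, j, hij⟩
  calc Module.finrank ℝ (Submodule.span ℝ (Set.range (Function.update u j v)))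
      ≤ Module.finrank ℝ ↥(W ⊔ ℝ ∙ z) := Submodule.finrank_mono hspan
    _ ≤ Module.finrank ℝ W + Module.finrank ℝ (ℝ ∙ z) :=
        Submodule.finrank_add_le_finrank_add_finrank _ _
    _ ≤ Fintype.card ι - 1 := by omega

end GramVectors

namespace SimpleGraph

variable {V : Type} [Fintype V] (G : SimpleGraph V)

def GramRankBound (k : ℕ) : Prop :=
  ∀ X : Matrix V V ℝ, X.PosSemidef →
    ∃ Y : Matrix V V ℝ, Y.PosSemidef ∧ Y.rank ≤ k ∧
      (∀ i, Y i i = X i i) ∧ (∀ i j, G.Adj i j → Y i j = X i j)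

variable {G}

theorem gramRankBound_card : G.GramRankBound (Fintype.card V) :=
  fun X hX ↦ ⟨X, hX, X.rank_le_card_width, fun _ ↦ rfl, fun _ _ _ ↦ rfl⟩

theorem GramRankBound.mono {k k' : ℕ} (h : G.GramRankBound k) (hkk' : k ≤ k') :
    G.GramRankBound k' := fun X hX ↦
  (h X hX).imp fun _ ⟨hY, hrank, hdiag, hadj⟩ ↦ ⟨hY, hrank.trans hkk', hdiag, hadj⟩

theorem gd_le {k : ℕ} (hk : 1 ≤ k) (h : G.GramRankBound k) : gd G ≤ k :=
  Nat.sInf_le ⟨hk, h⟩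

theorem GramRankBound.card_le_of_isClique {k : ℕ} (h : G.GramRankBound k) {s : Finset V}
    (hs : G.IsClique (s : Set V)) : #s ≤ k := by
  classical
  obtain ⟨Y, -, hrank, hdiag, hadj⟩ := h 1 PosSemidef.one
  have hsub : Y.submatrix (Subtype.val : s → V) (Subtype.val : s → V) = 1 := by
    ext a b
    rcases eq_or_ne a b with rfl | hab
    · simp [hdiag]
    · simp [hadj _ _ (hs a.2 b.2 (Subtype.coe_ne_coe.mpr hab)), one_apply_ne hab,
        one_apply_ne (Subtype.coe_ne_coe.mpr hab)]
  calc #s = (1 : Matrix s s ℝ).rank := by simp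
    _ = (Y.submatrix (Subtype.val : s → V) (Subtype.val : s → V)).rank := by rw [hsub]
    _ ≤ k := (rank_submatrix_le _ _ _).trans hrank

theorem card_le_gd_of_isClique {s : Finset V} (hs : G.IsClique (s : Set V)) : #s ≤ gd G :=
  le_csInf ⟨_, le_max_left 1 _, gramRankBound_card.mono (le_max_right _ _)⟩
    fun _ ⟨_, hk⟩ ↦ GramRankBound.card_le_of_isClique hk hs

theorem gramRankBound_card_sub_one_of_not_adj {i j : V} (hij : i ≠ j)
    (hG : ¬G.Adj i j) : G.GramRankBound (Fintype.card V - 1) := by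
  intro X hX
  obtain ⟨u, rfl⟩ := hX.exists_gram_eq (𝕜 := ℝ)
  obtain ⟨w, hw, hrank⟩ := exists_inner_eq_off_pair_finrank_span_le u hij
  have hoff : ∀ k l, G.Adj k l → s(k, l) ≠ s(i, j) := by
    rintro k l hkl h
    rcases Sym2.eq_iff.mp h with ⟨rfl, rfl⟩ | ⟨rfl, rfl⟩
    exacts [hG hkl, hG hkl.symm]
  exact ⟨gram ℝ w, posSemidef_gram ℝ w, (rank_gram_le w).trans hrank,
    fun k ↦ hw k k (by grind [Sym2.eq_iff]), fun k l hkl ↦ hw k l (hoff k l hkl)⟩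

end SimpleGraph

theorem gd_completeGraph_deleteEdge (n : ℕ) (i j : Fin n) (hij : i ≠ j) :
    gd ((⊤ : SimpleGraph (Fin n)).deleteEdges {s(i, j)}) = n - 1 := by
  set G := (⊤ : SimpleGraph (Fin n)).deleteEdges {s(i, j)}
  have hbound : G.GramRankBound (n - 1) := by
    simpa using G.gramRankBound_card_sub_one_of_not_adj hij (by simp [G])
  have hclique : G.IsClique (({j}ᶜ : Finset (Fin n)) : Set (Fin n)) := by
    intro a ha b hb hab
    simp_all [G]
  have hcard : #({j}ᶜ : Finset (Fin n)) = n - 1 := by simp [card_compl]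
  have hpos : 1 ≤ n - 1 := hcard ▸ card_pos.mpr ⟨i, by simpa using hij⟩
  refine le_antisymm (SimpleGraph.gd_le hpos hbound) ?_
  exact hcard ▸ SimpleGraph.card_le_gd_of_isClique hclique
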